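/- arXiv:1609.09531 — 2 statements merged into one kernel-verified Lean document; each statement's English description precedes it below -/
import Mathlib

section
/- Let F = F_{p^r} and G the additive group of GR(p^r, m). The nilpotency index of the radical M of F[G] is 1 + m(p^r − 1); that is, M^{m(p^r−1)} ≠ 0 but M^{1 + m(p^r − 1)} = 0. -/
/-!
The augmentation ideal `M` of `F[G]`, `G = (ℤ/q)^m` with `q = p^r`, is generated by the
`m` elements `tᵢ = xᵢ - 1`, where `xᵢ` are the standard generators of `G`, and
`tᵢ ^ q = xᵢ ^ q - 1 = 0` by the Frobenius. A product of `1 + m(q - 1)` generators repeats some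
`tᵢ` at least `q` times, so `M ^ (1 + m(q - 1)) = 0`. Conversely `xᵢ ↦ 1 + Xᵢ` defines a ring map
`F[G] → F[X₁, …, Xₘ] / (X₁^q, …, Xₘ^q)` sending `∏ tᵢ ^ (q - 1) ∈ M ^ (m(q - 1))` to the
nonzero class of the monomial `∏ Xᵢ ^ (q - 1)`.
-/

open AddMonoidAlgebra

namespace Ideal

variable {R : Type*} [CommSemiring R]

theorem sup_pow_add_add_one_le (I J : Ideal R) (n m : ℕ) :
    (I ⊔ J) ^ (n + m + 1) ≤ I ^ (n + 1) ⊔ J ^ (m + 1) := by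
  rw [← add_eq_sup, ← add_eq_sup, add_pow, sum_eq_sup]
  refine Finset.sup_le fun i hi => ?_
  by_cases hn : n + 1 ≤ i
  · exact mul_le_left.trans (mul_le_left.trans ((pow_le_pow_right hn).trans le_sup_left))
  · refine mul_le_left.trans (mul_le_right.trans ((pow_le_pow_right ?_).trans le_sup_right))
    grind

theorem span_range_pow_eq_bot_of_pow_eq_zero {ι : Type*} [Fintype ι] {t : ι → R} {n : ℕ}
    (ht : ∀ i, t i ^ (n + 1) = 0) : span (Set.range t) ^ (Fintype.card ι * n + 1) = ⊥ := by
  classical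
  suffices ∀ s : Finset ι, span (t '' s) ^ (s.card * n + 1) = ⊥ by
    simpa using this Finset.univ
  intro s
  induction s using Finset.induction with
  | empty => simp
  | insert a s ha ih =>
    rw [Finset.coe_insert, Set.image_insert_eq, span_insert, Finset.card_insert_of_notMem ha,
      ← le_bot_iff]
    calc (span {t a} ⊔ span (t '' s)) ^ ((s.card + 1) * n + 1)
        = (span {t a} ⊔ span (t '' s)) ^ (n + s.card * n + 1) := by ring_nf
      _ ≤ span {t a} ^ (n + 1) ⊔ span (t '' s) ^ (s.card * n + 1) := sup_pow_add_add_one_le ..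
      _ = ⊥ := by rw [ih, span_singleton_pow, ht, span_singleton_eq_bot.mpr rfl, sup_bot_eq]

end Ideal

namespace ZMod

variable {ι R : Type*} [Fintype ι] [CommMonoid R] {n : ℕ} [NeZero n]

theorem closure_range_pi_single_one [DecidableEq ι] :
    AddSubmonoid.closure (Set.range fun i : ι => Pi.single i (1 : ZMod n)) = ⊤ := by
  refine eq_top_iff.mpr fun g _ => ?_
  have hg : g = ∑ i, (g i).val • Pi.single i (1 : ZMod n) := by
    simp only [← Pi.single_smul, nsmul_one, natCast_zmod_val, Finset.univ_sum_single]
  rw [hg]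
  exact AddSubmonoid.sum_mem _ fun i _ =>
    AddSubmonoid.nsmul_mem _ (AddSubmonoid.subset_closure (Set.mem_range_self i)) _

def piPowHom (u : ι → R) (hu : ∀ i, u i ^ n = 1) : Multiplicative (ι → ZMod n) →* R where
  toFun g := ∏ i, u i ^ (g.toAdd i).val
  map_one' := by simp
  map_mul' g h := by
    rw [← Finset.prod_mul_distrib]
    refine Finset.prod_congr rfl fun i _ => ?_
    rw [toAdd_mul, Pi.add_apply, val_add, ← pow_eq_pow_mod _ (hu i), pow_add]

theorem piPowHom_single [DecidableEq ι] (u : ι → R) (hu : ∀ i, u i ^ n = 1) (i : ι) :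
    piPowHom u hu (.ofAdd (Pi.single i 1)) = u i := by
  rw [piPowHom, MonoidHom.coe_mk, OneHom.coe_mk, toAdd_ofAdd, Finset.prod_eq_single i]
  · rw [Pi.single_eq_same, val_one_eq_one_mod, ← pow_eq_pow_mod _ (hu i), pow_one]
  · intro j _ hj
    rw [Pi.single_eq_of_ne hj, val_zero, pow_zero]
  · simp

end ZMod

theorem MvPolynomial.prod_X_pow_notMem_span_X_pow {σ R : Type*} [Fintype σ] [CommSemiring R]
    [Nontrivial R] (n : ℕ) :
    ∏ i, X i ^ n ∉ Ideal.span (Set.range fun i : σ => (X i : MvPolynomial σ R) ^ (n + 1)) := by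
  classical
  simp only [X_pow_eq_monomial, ← monomial_sum_one]
  rw [Set.range_comp' (fun s => monomial s (1 : R)) (fun i => Finsupp.single i (n + 1)),
    mem_ideal_span_monomial_image]
  simp only [support_monomial, one_ne_zero, if_false, Finset.mem_singleton, forall_eq,
    Set.mem_range, exists_exists_eq_and, not_exists]
  intro i hle
  simpa [Finsupp.finsetSum_apply] using hle i

namespace AddMonoidAlgebra

variable {k G : Type*} [CommRing k] [AddCommMonoid G]

theorem single_sub_one_mem_of_mem_closure (I : Ideal k[G]) {S : Set G}
    (hS : ∀ s ∈ S, single s 1 - 1 ∈ I) {g : G} (hg : g ∈ AddSubmonoid.closure S) :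
    single g (1 : k) - 1 ∈ I := by
  induction hg using AddSubmonoid.closure_induction with
  | mem s hs => exact hS s hs
  | zero => simp [one_def]
  | add g h _ _ hg hh =>
    have hgh : single (g + h) (1 : k) = single g 1 * single h 1 := by
      rw [single_mul_single, one_mul]
    rw [show single (g + h) (1 : k) - 1 = (single g 1 - 1) * single h 1 + (single h 1 - 1) by
      rw [hgh]; ring]
    exact add_mem (I.mul_mem_right _ hg) hh

theorem eq_sum_smul_single_sub_one [Fintype G] (a : k[G]) (ha : ∑ g, a.coeff g = 0) :
    a = ∑ g, a.coeff g • (single g 1 - 1) := by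
  simp only [smul_sub, smul_single', mul_one, Finset.sum_sub_distrib, ← Finset.sum_smul, ha,
    zero_smul, sub_zero]
  conv_lhs => rw [← sum_coeff_single a]
  exact Finsupp.sum_fintype _ _ (fun _ => single_zero _)

theorem eq_span_single_sub_one_of_closure_eq_top [Fintype G] {S : Set G}
    (hS : AddSubmonoid.closure S = ⊤) (M : Ideal k[G]) (hM : ∀ a, a ∈ M ↔ ∑ g, a.coeff g = 0) :
    M = Ideal.span ((fun s => single s (1 : k) - 1) '' S) := by
  set J := Ideal.span ((fun s => single s (1 : k) - 1) '' S)
  have hJ (g : G) : single g (1 : k) - 1 ∈ J :=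
    single_sub_one_mem_of_mem_closure J (fun s hs => Ideal.subset_span (Set.mem_image_of_mem _ hs))
      (by rw [hS]; trivial)
  refine le_antisymm (fun a ha => ?_) (Ideal.span_le.mpr ?_)
  · rw [eq_sum_smul_single_sub_one a ((hM a).mp ha)]
    exact J.sum_mem fun g _ => J.smul_of_tower_mem (a.coeff g) (hJ g)
  · rintro - ⟨s, -, rfl⟩
    rw [SetLike.mem_coe, hM]
    simp [one_def]

theorem single_sub_one_pow_char_pow (p : ℕ) [Fact p.Prime] [CharP k p] (g : G) (r : ℕ) :
    (single g (1 : k) - 1) ^ p ^ r = single (p ^ r • g) 1 - 1 := by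
  have : CharP k[G] p := charP_of_injective_algebraMap' k p
  rw [sub_pow_char_pow, single_pow, one_pow, one_pow]

open MvPolynomial in
theorem prod_single_sub_one_pow_ne_zero {ι : Type*} [Fintype ι] [DecidableEq ι] [Nontrivial k]
    (p : ℕ) [Fact p.Prime] [CharP k p] (r : ℕ) :
    ∏ i : ι, (single (Pi.single i 1 : ι → ZMod (p ^ r)) (1 : k) - 1) ^ (p ^ r - 1) ≠ 0 := by
  set I := Ideal.span (Set.range fun i : ι => (X i : MvPolynomial ι k) ^ p ^ r)
  have hu (i : ι) : Ideal.Quotient.mk I (1 + X i) ^ p ^ r = 1 := by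
    rw [← map_pow, add_pow_char_pow, one_pow, map_add, map_one,
      Ideal.Quotient.eq_zero_iff_mem.mpr (Ideal.subset_span (Set.mem_range_self i)), add_zero]
  set ψ := lift k (MvPolynomial ι k ⧸ I) (ι → ZMod (p ^ r)) (ZMod.piPowHom _ hu)
  have hψ (i : ι) : ψ (single (Pi.single i 1) 1 - 1) = Ideal.Quotient.mk I (X i) := by
    rw [map_sub, map_one, lift_single, one_smul, ZMod.piPowHom_single, map_add, map_one,
      add_sub_cancel_left]
  intro h
  apply prod_X_pow_notMem_span_X_pow (R := k) (σ := ι) (p ^ r - 1)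
  rw [Nat.sub_add_cancel NeZero.one_le, ← Ideal.Quotient.eq_zero_iff_mem]
  simpa only [map_prod, map_pow, hψ, map_zero] using congrArg ψ h

end AddMonoidAlgebra

theorem radical_nilpotency_index_general (p r m : ℕ) (hp : p.Prime)
    [NeZero (p ^ r)] (F : Type*) [Field F] [Fintype F] (hF : Fintype.card F = p ^ r)
    (M : Ideal (AddMonoidAlgebra F (Fin m → ZMod (p ^ r))))
    (hM : ∀ a : AddMonoidAlgebra F (Fin m → ZMod (p ^ r)),
      a ∈ M ↔ ∑ g : Fin m → ZMod (p ^ r), a.coeff g = 0) :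
    M ^ (m * (p ^ r - 1)) ≠ ⊥ ∧ M ^ (1 + m * (p ^ r - 1)) = ⊥ := by
  have : Fact p.Prime := ⟨hp⟩
  have : CharP F p := charP_of_card_eq_prime_pow hF
  set t : Fin m → AddMonoidAlgebra F (Fin m → ZMod (p ^ r)) :=
    fun i => single (Pi.single i 1) 1 - 1
  have hMt : M = Ideal.span (Set.range t) := by
    rw [eq_span_single_sub_one_of_closure_eq_top ZMod.closure_range_pi_single_one M hM,
      ← Set.range_comp]
    rfl
  constructor
  · intro hbot
    have hmem : ∏ i, t i ^ (p ^ r - 1) ∈ ∏ _i : Fin m, M ^ (p ^ r - 1) :=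
      Ideal.prod_mem_prod fun i _ => Ideal.pow_mem_pow (hMt ▸ Ideal.subset_span ⟨i, rfl⟩) _
    rw [Finset.prod_const, Finset.card_univ, Fintype.card_fin, ← pow_mul, mul_comm, hbot,
      Ideal.mem_bot] at hmem
    exact prod_single_sub_one_pow_ne_zero p r hmem
  · have ht (i : Fin m) : t i ^ (p ^ r - 1 + 1) = 0 := by
      rw [Nat.sub_add_cancel NeZero.one_le, single_sub_one_pow_char_pow,
        ← Nat.cast_smul_eq_nsmul (ZMod (p ^ r)), ZMod.natCast_self, zero_smul, ← one_def, sub_self]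
    simpa [hMt, add_comm] using Ideal.span_range_pow_eq_bot_of_pow_eq_zero ht

/-- With `F = F_{p^r}` and `G` the additive group of `GR(p^r, m)` (modelled as
`Fin m → ZMod (p ^ r)`), the nilpotency index of the radical `M` (the augmentation ideal)
of `F[G]` is `1 + m(p^r - 1)`: `M^(m(p^r-1)) ≠ 0` but `M^(1 + m(p^r-1)) = 0`. -/
theorem radical_nilpotency_index (p r m : ℕ) (hp : p.Prime) (hr : 1 ≤ r) (hm : 1 ≤ m)
    [NeZero (p ^ r)] (F : Type*) [Field F] [Fintype F] (hF : Fintype.card F = p ^ r)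
    (M : Ideal (AddMonoidAlgebra F (Fin m → ZMod (p ^ r))))
    (hM : ∀ a : AddMonoidAlgebra F (Fin m → ZMod (p ^ r)),
      a ∈ M ↔ ∑ g : Fin m → ZMod (p ^ r), a.coeff g = 0) :
    M ^ (m * (p ^ r - 1)) ≠ ⊥ ∧ M ^ (1 + m * (p ^ r - 1)) = ⊥ :=
  radical_nilpotency_index_general p r m hp F hF M hM
end

section
/- With notation as above, the GRM code C_ν(m,q) ⊆ F_q[G] of order ν (1 ≤ ν ≤ m(q−1)−1) is generated as an F_q-vector space by the set K_ν = {θ_0^0} ∪ {θ_i^j : 1 ≤ i ≤ ν, 0 ≤ j ≤ N(m(q−1)−i) − 1}, where θ_i^j = φ(z^j f_i(z)); moreover these elements are linearly independent and #K_ν = dim_{F_q} C_ν(m,q). -/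
/-!
With `n = q^m - 1`, the polynomials `f_i` form a divisibility chain
`f_ν ∣ f_{ν-1} ∣ ⋯ ∣ f_0 ∣ z^n - 1` with `deg f_0 = n - 1` and
`deg f_{i-1} = deg f_i + N(m(q-1) - i)`: passing from `f_i` to `f_{i-1}` adjoins the roots `γ^k`
with `ω_q(k) = m(q-1) - i`. Hence the degrees `deg f_i + j` of the monic polynomials
`z^j f_i(z)` indexing `K_ν` run through `[deg f_ν, n - 1]` exactly once. Such polynomials are
linearly independent in `F_q[z]/(z^n - 1)` and lie in the ideal `(f_ν)`, whose dimension is at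
most `n - deg f_ν`; so they form a basis of it, and `φ` carries this basis to one of `C_ν(m,q)`.
-/

open Polynomial Finset

/-- `ω_q(k)` for `k < q ^ m`. -/
def digitSum (q m k : ℕ) : ℕ := ∑ l ∈ range m, k / q ^ l % q

section DigitSum

variable {q : ℕ}

theorem digitSum_succ (m k : ℕ) : digitSum q (m + 1) k = k % q + digitSum q m (k / q) := by
  simp only [digitSum, sum_range_succ', pow_succ', ← Nat.div_div_eq_div_mul, pow_zero,
    Nat.div_one, add_comm]

theorem digitSum_le (hq : 0 < q) (m k : ℕ) : digitSum q m k ≤ m * (q - 1) := by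
  induction m generalizing k with
  | zero => simp [digitSum]
  | succ m ih =>
    have := Nat.mod_lt k hq
    have := ih (k / q)
    rw [digitSum_succ, add_mul, one_mul]; omega

theorem digitSum_eq_zero_iff (hq : 0 < q) {m k : ℕ} (hk : k < q ^ m) :
    digitSum q m k = 0 ↔ k = 0 := by
  induction m generalizing k with
  | zero => simp_all [digitSum]
  | succ m ih =>
    rw [digitSum_succ, Nat.add_eq_zero_iff, ih (Nat.div_lt_of_lt_mul (by rwa [← pow_succ'])),
      Nat.div_eq_zero_iff_lt hq]
    constructor
    · rintro ⟨h1, h2⟩; rw [← Nat.div_add_mod k q, Nat.div_eq_of_lt h2, h1]; simp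
    · rintro rfl; simp [hq]

theorem digitSum_eq_mul_iff (hq : 0 < q) {m k : ℕ} (hk : k < q ^ m) :
    digitSum q m k = m * (q - 1) ↔ k = q ^ m - 1 := by
  induction m generalizing k with
  | zero => simp_all [digitSum]
  | succ m ih =>
    have := Nat.mod_lt k hq
    have := digitSum_le hq m (k / q)
    have hpow : q ≤ q * q ^ m := Nat.le_mul_of_pos_right q (Nat.pow_pos hq)
    have hlast : (q - 1) + q * (q ^ m - 1) = q ^ (m + 1) - 1 := by
      rw [pow_succ', Nat.mul_sub_one]; omega
    calc digitSum q (m + 1) k = (m + 1) * (q - 1)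
        ↔ k / q = q ^ m - 1 ∧ k % q = q - 1 := by
          rw [digitSum_succ, add_mul, one_mul,
            ← ih (Nat.div_lt_of_lt_mul (by rwa [← pow_succ']))]
          omega
      _ ↔ k = q ^ (m + 1) - 1 := by rw [Nat.div_mod_unique hq, hlast]; omega

/-- The exponents `k` of the roots `γ^k` of `f_i`. -/
def rootExponents (q m i : ℕ) : Finset ℕ :=
  {k ∈ range (q ^ m) | 0 < digitSum q m k ∧ digitSum q m k ≤ m * (q - 1) - i - 1}

theorem rootExponents_antitone (m : ℕ) : Antitone (rootExponents q m) := fun i j hij k hk => by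
  simp only [rootExponents, mem_filter] at hk ⊢
  exact ⟨hk.1, hk.2.1, by omega⟩

theorem rootExponents_zero (hq : 0 < q) (m : ℕ) : rootExponents q m 0 = Ioo 0 (q ^ m - 1) := by
  ext k
  simp only [rootExponents, mem_filter, mem_range, mem_Ioo]
  constructor
  · rintro ⟨hk, h⟩
    have := digitSum_eq_zero_iff hq hk
    have := digitSum_eq_mul_iff hq hk
    omega
  · intro h
    have hk : k < q ^ m := by omega
    have := digitSum_le hq m k
    have := digitSum_eq_zero_iff hq hk
    have := digitSum_eq_mul_iff hq hk
    exact ⟨hk, by omega⟩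

theorem card_rootExponents_zero (hq : 0 < q) (m : ℕ) : #(rootExponents q m 0) = q ^ m - 2 := by
  rw [rootExponents_zero hq, Nat.card_Ioo]
  omega

theorem rootExponents_subset_range (hq : 0 < q) (m i : ℕ) :
    rootExponents q m i ⊆ range (q ^ m - 1) := fun k hk => by
  have := mem_Ioo.1 (rootExponents_zero hq m ▸ rootExponents_antitone m (Nat.zero_le i) hk)
  exact mem_range.2 this.2

theorem card_rootExponents_eq_add {m i : ℕ} (hi : i + 1 < m * (q - 1)) :
    #(rootExponents q m i) = #(rootExponents q m (i + 1)) +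
      #{k ∈ range (q ^ m) | digitSum q m k = m * (q - 1) - (i + 1)} := by
  classical
  unfold rootExponents
  rw [← card_union_of_disjoint (disjoint_filter.2 fun k _ h => by omega), ← filter_or]
  congr 1
  ext k
  simp only [mem_filter, and_congr_right_iff]
  omega

end DigitSum

/-- The index set of `K_ν`, for `L i = N(m(q-1) - i)`. -/
def stairIndex (L : ℕ → ℕ) (ν : ℕ) : Set (ℕ × ℕ) :=
  {ij | ij = (0, 0) ∨ (1 ≤ ij.1 ∧ ij.1 ≤ ν ∧ ij.2 < L ij.1)}

section Staircase

variable {D L : ℕ → ℕ} {ν : ℕ}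

theorem mk_mem_stairIndex {i j : ℕ} :
    (i, j) ∈ stairIndex L ν ↔ i = 0 ∧ j = 0 ∨ 1 ≤ i ∧ i ≤ ν ∧ j < L i := by
  simp [stairIndex]

theorem fst_le_of_mem_stairIndex {ij : ℕ × ℕ} (h : ij ∈ stairIndex L ν) : ij.1 ≤ ν := by
  rcases h with rfl | h
  exacts [Nat.zero_le ν, h.2.1]

theorem antitoneOn_Iic_of_eq_add (hD : ∀ i < ν, D i = D (i + 1) + L (i + 1)) :
    AntitoneOn D (Set.Iic ν) := by
  intro i _ j hj hij
  induction j, hij using Nat.le_induction with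
  | base => rfl
  | succ j hij ih =>
    have := hD j hj
    have := ih (Nat.le_of_succ_le hj)
    omega

/-- The pairs `(i, j)` with `i ≥ 1` fill the block `[D i, D (i - 1))`, and `(0, 0)` supplies
`D 0`. -/
theorem bijOn_stairIndex (hD : ∀ i < ν, D i = D (i + 1) + L (i + 1)) :
    Set.BijOn (fun ij : ℕ × ℕ => D ij.1 + ij.2) (stairIndex L ν) (Set.Icc (D ν) (D 0)) := by
  have hle {i j : ℕ} (hij : i ≤ j) (hj : j ≤ ν) : D j ≤ D i :=
    antitoneOn_Iic_of_eq_add hD (Set.mem_Iic.2 (hij.trans hj)) (Set.mem_Iic.2 hj) hij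
  have hblock {i : ℕ} (h1 : 1 ≤ i) (h2 : i ≤ ν) : D (i - 1) = D i + L i := by
    simpa [Nat.sub_add_cancel h1] using hD (i - 1) (by omega)
  have hlt {i j i' j' : ℕ} (hij : (i, j) ∈ stairIndex L ν)
      (hij' : (i', j') ∈ stairIndex L ν) (hii' : i < i') : D i' + j' < D i + j := by
    rw [mk_mem_stairIndex] at hij hij'
    have := hle (i := i) (j := i' - 1) (by omega) (by omega)
    have := hblock (i := i') (by omega) (by omega)
    omega
  refine ⟨?_, ?_, ?_⟩
  · rintro ⟨i, j⟩ hij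
    have := hle (Nat.zero_le ν) le_rfl
    rw [mk_mem_stairIndex] at hij
    rcases hij with ⟨rfl, rfl⟩ | ⟨h1, h2, h3⟩
    · exact ⟨this, le_rfl⟩
    · have := hblock h1 h2
      have := hle (Nat.zero_le (i - 1)) (by omega)
      have := hle h2 le_rfl
      constructor <;> dsimp only <;> omega
  · rintro ⟨i, j⟩ hij ⟨i', j'⟩ hij' h
    dsimp only at h
    rcases lt_trichotomy i i' with hii' | rfl | hii'
    · exact absurd h (hlt hij hij' hii').ne'
    · rw [Nat.add_left_cancel h]
    · exact absurd h (hlt hij' hij hii').ne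
  · intro e ⟨he1, he2⟩
    have hex : ∃ i, D i ≤ e := ⟨ν, he1⟩
    obtain ⟨hi, hiν⟩ : D (Nat.find hex) ≤ e ∧ Nat.find hex ≤ ν :=
      ⟨Nat.find_spec hex, Nat.find_min' hex he1⟩
    rcases Nat.eq_zero_or_pos (Nat.find hex) with h0 | hpos
    · rw [h0] at hi
      exact ⟨(0, 0), mk_mem_stairIndex.2 (Or.inl ⟨rfl, rfl⟩), by dsimp only; omega⟩
    · have hmin : ¬ D (Nat.find hex - 1) ≤ e := Nat.find_min hex (by omega)
      have := hblock hpos hiν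
      exact ⟨(Nat.find hex, e - D (Nat.find hex)),
        mk_mem_stairIndex.2 (Or.inr ⟨hpos, hiν, by omega⟩), by dsimp only; omega⟩

theorem natCard_stairIndex (hD : ∀ i < ν, D i = D (i + 1) + L (i + 1)) :
    Nat.card (stairIndex L ν) = D 0 + 1 - D ν := by
  rw [Nat.card_congr ((bijOn_stairIndex hD).equiv _), Nat.card_coe_set_eq, Set.ncard_Icc_nat]

end Staircase

namespace Polynomial

section Quotient

variable {F : Type*} [Field F]

theorem linearIndependent_of_monic_of_injective_natDegree {ι : Type*} {P : ι → F[X]}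
    (hP : ∀ i, (P i).Monic) (hdeg : Function.Injective fun i => (P i).natDegree) :
    LinearIndependent F P := by
  classical
  rw [linearIndependent_iff']
  intro s c hsum i₀ hi₀
  by_contra hc
  obtain ⟨j, hj, hjmax⟩ := (s.filter (c · ≠ 0)).exists_max_image (fun i => (P i).natDegree)
    ⟨i₀, mem_filter.2 ⟨hi₀, hc⟩⟩
  rw [mem_filter] at hj
  -- the top coefficient of `P j` occurs in no other term of the sum
  have := congrArg (coeff · (P j).natDegree) hsum
  simp only [finsetSum_coeff, coeff_smul, smul_eq_mul, coeff_zero] at this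
  rw [sum_eq_single j, (hP j).coeff_natDegree, mul_one] at this
  · exact hj.2 this
  · intro i hi hij
    by_cases hci : c i = 0
    · rw [hci, zero_mul]
    · have hlt := (hjmax i (mem_filter.2 ⟨hi, hci⟩)).lt_of_ne (hdeg.ne hij)
      rw [coeff_eq_zero_of_natDegree_lt hlt, mul_zero]
  · exact fun h => (h hj.1).elim

theorem linearIndependent_mk_of_natDegree_lt {ι : Type*} {Q : F[X]} (hQ : Q ≠ 0)
    {P : ι → F[X]} (hP : LinearIndependent F P) (hlt : ∀ i, (P i).natDegree < Q.natDegree) :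
    LinearIndependent F fun i => Ideal.Quotient.mk (Ideal.span {Q}) (P i) := by
  refine hP.map (f := (Ideal.Quotient.mkₐ F (Ideal.span {Q})).toLinearMap) ?_
  have hspan : Submodule.span F (Set.range P) ≤ degreeLT F Q.natDegree :=
    Submodule.span_le.2 <| Set.range_subset_iff.2 fun i =>
      mem_degreeLT.2 (degree_le_natDegree.trans_lt (WithBot.coe_lt_coe.2 (hlt i)))
  refine Submodule.disjoint_def.2 fun p hp hker => ?_
  rw [LinearMap.mem_ker, AlgHom.toLinearMap_apply, Ideal.Quotient.mkₐ_eq_mk,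
    Ideal.Quotient.eq_zero_iff_mem, Ideal.mem_span_singleton] at hker
  exact eq_zero_of_dvd_of_degree_lt hker
    ((mem_degreeLT.1 (hspan hp)).trans_eq (degree_eq_natDegree hQ).symm)

/-- Multiples of `f` in `F[X] ⧸ (f * G)` are represented by `p * f` with `deg p < deg G`. -/
theorem span_singleton_mk_le_range {f G : F[X]} (hG : G.Monic) :
    (Ideal.span {Ideal.Quotient.mk (Ideal.span {f * G}) f}).restrictScalars F ≤
      LinearMap.range ((Ideal.Quotient.mkₐ F (Ideal.span {f * G})).toLinearMap ∘ₗ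
        LinearMap.mulRight F f ∘ₗ (degreeLT F G.natDegree).subtype) := by
  intro x hx
  obtain ⟨a, rfl⟩ := Ideal.mem_span_singleton'.1 hx
  obtain ⟨h, rfl⟩ := Ideal.Quotient.mk_surjective a
  have hmod : h %ₘ G ∈ degreeLT F G.natDegree :=
    mem_degreeLT.2 ((degree_modByMonic_lt h hG).trans_eq (degree_eq_natDegree hG.ne_zero))
  refine ⟨⟨h %ₘ G, hmod⟩, ?_⟩
  simp only [LinearMap.coe_comp, Function.comp_apply, Submodule.coe_subtype,
    LinearMap.mulRight_apply, AlgHom.toLinearMap_apply, Ideal.Quotient.mkₐ_eq_mk, ← map_mul]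
  rw [Ideal.Quotient.eq, Ideal.mem_span_singleton]
  exact ⟨-(h /ₘ G), by linear_combination f * modByMonic_add_div h G⟩

theorem span_mk_eq_span_singleton_mk {ι : Type*} {Q f : F[X]} (hQ : Q.Monic) (hf : f.Monic)
    (hfQ : f ∣ Q) {P : ι → F[X]}
    (hli : LinearIndependent F fun i => Ideal.Quotient.mk (Ideal.span {Q}) (P i))
    (hdvd : ∀ i, f ∣ P i) (hcard : Q.natDegree - f.natDegree ≤ Nat.card ι) :
    Submodule.span F (Set.range fun i => Ideal.Quotient.mk (Ideal.span {Q}) (P i)) =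
      (Ideal.span {Ideal.Quotient.mk (Ideal.span {Q}) f}).restrictScalars F := by
  obtain ⟨G, rfl⟩ := hfQ
  have hG : G.Monic := hf.of_mul_monic_left hQ
  have hrange := span_singleton_mk_le_range (F := F) (f := f) hG
  have : Module.Finite F (degreeLT F G.natDegree) := .equiv (degreeLTEquiv F _).symm
  have : FiniteDimensional F _ := Submodule.finiteDimensional_of_le hrange
  refine Submodule.eq_of_le_of_finrank_le ?_ ?_
  · exact Submodule.span_le.2 <| Set.range_subset_iff.2 fun i =>
      Ideal.mem_span_singleton.2 (_root_.map_dvd (Ideal.Quotient.mk _) (hdvd i))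
  · calc _ ≤ Module.finrank F (LinearMap.range _) := Submodule.finrank_mono hrange
      _ ≤ Module.finrank F (degreeLT F G.natDegree) := LinearMap.finrank_range_le _
      _ = G.natDegree := by rw [(degreeLTEquiv F _).finrank_eq, Module.finrank_fin_fun]
      _ ≤ Nat.card ι := by rwa [hf.natDegree_mul hG, Nat.add_sub_cancel_left] at hcard
      _ = _ := (Module.finrank_eq_nat_card_basis (Module.Basis.span hli)).symm

end Quotient

section RootProducts

variable {F K : Type*} [Field F] [Field K] [Algebra F K] {ι : Type*} {a : ι → K}
  {s t : Finset ι} {f g : F[X]}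

theorem monic_of_map_eq_prod_X_sub_C (hf : f.map (algebraMap F K) = ∏ k ∈ s, (X - C (a k))) :
    f.Monic := by
  rw [← monic_map_iff (f := algebraMap F K), hf]
  exact monic_prod_of_monic _ _ fun k _ => monic_X_sub_C _

theorem natDegree_of_map_eq_prod_X_sub_C
    (hf : f.map (algebraMap F K) = ∏ k ∈ s, (X - C (a k))) : f.natDegree = #s := by
  rw [← natDegree_map (algebraMap F K), hf, natDegree_finsetProd_X_sub_C_eq_card]

theorem dvd_of_map_eq_prod_X_sub_C (hf : f.map (algebraMap F K) = ∏ k ∈ s, (X - C (a k)))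
    (hg : g.map (algebraMap F K) = ∏ k ∈ t, (X - C (a k))) (hst : s ⊆ t) : f ∣ g := by
  rw [← map_dvd_map' (algebraMap F K), hf, hg]
  exact prod_dvd_prod_of_subset _ _ _ hst

end RootProducts

section RootsOfUnity

variable {F K : Type*} [Field F] [Field K] [Algebra F K] {ζ : K} {n : ℕ} {s : Finset ℕ}

theorem prod_X_sub_C_pow_dvd_X_pow_sub_one (hζ : IsPrimitiveRoot ζ n)
    (hs : s ⊆ range n) : ∏ k ∈ s, (X - C (ζ ^ k)) ∣ X ^ n - 1 := by
  classical
  rcases Nat.eq_zero_or_pos n with rfl | hn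
  · simp_all
  rw [X_pow_sub_one_eq_prod hn hζ, ← prod_image (f := fun x => X - C x) fun i hi j hj h =>
    hζ.pow_inj (mem_range.1 (hs hi)) (mem_range.1 (hs hj)) h]
  refine prod_dvd_prod_of_subset _ _ _ fun x hx => ?_
  obtain ⟨k, -, rfl⟩ := mem_image.1 hx
  rw [mem_nthRootsFinset hn, ← pow_mul, mul_comm, pow_mul, hζ.pow_eq_one, one_pow]

theorem dvd_X_pow_sub_one_of_map_eq_prod (hζ : IsPrimitiveRoot ζ n) (hs : s ⊆ range n)
    {f : F[X]} (hf : f.map (algebraMap F K) = ∏ k ∈ s, (X - C (ζ ^ k))) : f ∣ X ^ n - 1 := by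
  rw [← map_dvd_map' (algebraMap F K), hf, Polynomial.map_sub, Polynomial.map_pow, map_X,
    Polynomial.map_one]
  exact prod_X_sub_C_pow_dvd_X_pow_sub_one hζ hs

theorem isPrimitiveRoot_of_forall_mem_zpowers [Fintype K] {γ : Kˣ}
    (hγ : ∀ u : Kˣ, u ∈ Subgroup.zpowers γ) :
    IsPrimitiveRoot (γ : K) (Fintype.card K - 1) := by
  classical
  rw [IsPrimitiveRoot.iff_orderOf, orderOf_units, orderOf_eq_card_of_forall_mem_zpowers hγ,
    Nat.card_eq_fintype_card, Fintype.card_units]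

end RootsOfUnity

section StairFamily

variable {F : Type*} [Field F] {f : ℕ → F[X]} {L : ℕ → ℕ} {ν : ℕ} {Q : F[X]}

noncomputable def stairFamily (f : ℕ → F[X]) (L : ℕ → ℕ) (ν : ℕ)
    (x : stairIndex L ν) : F[X] :=
  X ^ x.1.2 * f x.1.1

theorem monic_stairFamily (hf : ∀ i, (f i).Monic) (x : stairIndex L ν) :
    (stairFamily f L ν x).Monic :=
  (monic_X_pow _).mul (hf _)

theorem natDegree_stairFamily (hf : ∀ i, (f i).Monic) (x : stairIndex L ν) :
    (stairFamily f L ν x).natDegree = (f x.1.1).natDegree + x.1.2 := by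
  rw [stairFamily, (monic_X_pow _).natDegree_mul (hf _), natDegree_X_pow, add_comm]

theorem linearIndependent_stairFamily_mk (hf : ∀ i, (f i).Monic)
    (hdeg : ∀ i < ν, (f i).natDegree = (f (i + 1)).natDegree + L (i + 1)) (hQ0 : Q ≠ 0)
    (hQ : (f 0).natDegree < Q.natDegree) :
    LinearIndependent F fun x => Ideal.Quotient.mk (Ideal.span {Q}) (stairFamily f L ν x) := by
  have hbij := bijOn_stairIndex hdeg
  refine linearIndependent_mk_of_natDegree_lt hQ0 ?_ fun x => ?_
  · refine linearIndependent_of_monic_of_injective_natDegree (monic_stairFamily hf)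
      fun x y h => ?_
    simp only [natDegree_stairFamily hf] at h
    exact Subtype.ext (hbij.injOn x.2 y.2 h)
  · rw [natDegree_stairFamily hf]
    exact (hbij.mapsTo x.2).2.trans_lt hQ

theorem span_stairFamily_mk (hf : ∀ i, (f i).Monic)
    (hdeg : ∀ i < ν, (f i).natDegree = (f (i + 1)).natDegree + L (i + 1))
    (hdvd : ∀ i ≤ ν, f ν ∣ f i) (hQ : Q.Monic) (hQdeg : Q.natDegree = (f 0).natDegree + 1)
    (hfQ : f ν ∣ Q) :
    Submodule.span F
        (Set.range fun x => Ideal.Quotient.mk (Ideal.span {Q}) (stairFamily f L ν x)) =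
      (Ideal.span {Ideal.Quotient.mk (Ideal.span {Q}) (f ν)}).restrictScalars F :=
  span_mk_eq_span_singleton_mk hQ (hf ν) hfQ
    (linearIndependent_stairFamily_mk hf hdeg hQ.ne_zero (by omega))
    (fun x => (hdvd _ (fst_le_of_mem_stairIndex x.2)).mul_left _)
    (by rw [natCard_stairIndex hdeg, hQdeg])

end StairFamily

end Polynomial

theorem GRM_generating_set_general (m q : ℕ)
    (Fq : Type*) [Field Fq]
    (K : Type*) [Field K] [Fintype K] (hK : Fintype.card K = q ^ m) [Algebra Fq K]
    (γ : Kˣ) (hγ : ∀ u : Kˣ, u ∈ Subgroup.zpowers γ)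
    (ω : ℕ → ℕ) (hω : ∀ i, ω i = ∑ l ∈ Finset.range m, i / q ^ l % q)
    (N : ℕ → ℕ)
    (hN : ∀ t, N t = ((Finset.range (q ^ m)).filter (fun k => ω k = t)).card)
    (φ : (Polynomial Fq ⧸ (Ideal.span {Polynomial.X ^ (q ^ m - 1) - 1} :
            Ideal (Polynomial Fq))) →ₗ[Fq] AddMonoidAlgebra Fq (Fin m → ZMod q))
    (hφinj : Function.Injective φ)
    (Fpoly : ℕ → Polynomial Fq)
    (hFpoly : ∀ k, (Fpoly k).map (algebraMap Fq K) =
      ∏ i ∈ (Finset.range (q ^ m)).filter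
          (fun i => 0 < ω i ∧ ω i ≤ m * (q - 1) - k - 1),
        (Polynomial.X - Polynomial.C ((γ : K) ^ i)))
    (Code : ℕ → Submodule Fq (AddMonoidAlgebra Fq (Fin m → ZMod q)))
    (hCode : ∀ k, Code k = Submodule.map φ
      (Submodule.restrictScalars Fq (Ideal.span {Ideal.Quotient.mk _ (Fpoly k)})))
    (θ : ℕ → ℕ → AddMonoidAlgebra Fq (Fin m → ZMod q))
    (hθ : ∀ i j, θ i j = φ (Ideal.Quotient.mk _ (Polynomial.X ^ j * Fpoly i)))
    (ν : ℕ) (hν1 : 1 ≤ ν) (hν2 : ν ≤ m * (q - 1) - 1) :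
    LinearIndependent Fq
        (fun x : {ij : ℕ × ℕ // ij = (0, 0) ∨
            (1 ≤ ij.1 ∧ ij.1 ≤ ν ∧ ij.2 < N (m * (q - 1) - ij.1))} =>
          θ x.1.1 x.1.2) ∧
      Submodule.span Fq
          (Set.range (fun x : {ij : ℕ × ℕ // ij = (0, 0) ∨
              (1 ≤ ij.1 ∧ ij.1 ≤ ν ∧ ij.2 < N (m * (q - 1) - ij.1))} =>
            θ x.1.1 x.1.2)) = Code ν ∧
      Nat.card {ij : ℕ × ℕ // ij = (0, 0) ∨
          (1 ≤ ij.1 ∧ ij.1 ≤ ν ∧ ij.2 < N (m * (q - 1) - ij.1))} =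
        Module.finrank Fq (Code ν) := by
  classical
  obtain rfl : ω = digitSum q m := funext hω
  set L := fun i => N (m * (q - 1) - i)
  have hM : 2 ≤ m * (q - 1) := by omega
  have hq : 1 < q := by by_contra h; simp [show q - 1 = 0 by omega] at hM
  have hn : 2 ≤ q ^ m := Nat.one_lt_pow (by rintro rfl; simp at hM) hq
  have hFmonic i : (Fpoly i).Monic := monic_of_map_eq_prod_X_sub_C (hFpoly i)
  have hFdeg i : (Fpoly i).natDegree = #(rootExponents q m i) :=
    natDegree_of_map_eq_prod_X_sub_C (hFpoly i)
  have hFstep : ∀ i < ν, (Fpoly i).natDegree = (Fpoly (i + 1)).natDegree + L (i + 1) :=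
    fun i hi => by rw [hFdeg, hFdeg, card_rootExponents_eq_add (by omega), ← hN]
  have hFdvd i (hi : i ≤ ν) : Fpoly ν ∣ Fpoly i :=
    dvd_of_map_eq_prod_X_sub_C (hFpoly ν) (hFpoly i) (rootExponents_antitone m hi)
  have hFQ : Fpoly ν ∣ X ^ (q ^ m - 1) - 1 :=
    dvd_X_pow_sub_one_of_map_eq_prod (hK ▸ isPrimitiveRoot_of_forall_mem_zpowers hγ)
      (rootExponents_subset_range (by omega) m ν) (hFpoly ν)
  have hQmonic : (X ^ (q ^ m - 1) - 1 : Fq[X]).Monic := by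
    simpa using monic_X_pow_sub_C (1 : Fq) (n := q ^ m - 1) (by omega)
  have hQdeg : (X ^ (q ^ m - 1) - 1 : Fq[X]).natDegree = (Fpoly 0).natDegree + 1 := by
    rw [hFdeg, card_rootExponents_zero (by omega), show q ^ m - 2 + 1 = q ^ m - 1 by omega]
    simpa using natDegree_X_pow_sub_C (n := q ^ m - 1) (r := (1 : Fq))
  have hli := (linearIndependent_stairFamily_mk hFmonic hFstep hQmonic.ne_zero
    (by omega)).map' φ (LinearMap.ker_eq_bot.2 hφinj)
  have hspan := congrArg (Submodule.map φ)
    (span_stairFamily_mk hFmonic hFstep hFdvd hQmonic hQdeg hFQ)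
  rw [Submodule.map_span, ← Set.range_comp] at hspan
  simp only [hθ, hCode]
  refine ⟨hli, hspan, ?_⟩
  rw [hCode, ← hspan, Module.finrank_eq_nat_card_basis (Module.Basis.span hli)]
  rfl

/-- The GRM code `C_ν(m,q) ⊆ F_q[G]` of order `ν` (`1 ≤ ν ≤ m(q-1)-1`) is generated as an
`F_q`-vector space by `K_ν = {θ_0^0} ∪ {θ_i^j : 1 ≤ i ≤ ν, 0 ≤ j ≤ N(m(q-1)-i) - 1}`,
where `θ_i^j = φ(z^j f_i(z))`; moreover these elements are linearly independent and
`#K_ν = dim_{F_q} C_ν(m,q)`. -/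
theorem GRM_generating_set (p r m q : ℕ) (hp : p.Prime) (hr : 1 ≤ r) (hm : 1 ≤ m)
    (hq : q = p ^ r) [NeZero q]
    (Fq : Type*) [Field Fq] [Fintype Fq] (hFq : Fintype.card Fq = q)
    (K : Type*) [Field K] [Fintype K] (hK : Fintype.card K = q ^ m) [Algebra Fq K]
    (γ : Kˣ) (hγ : ∀ u : Kˣ, u ∈ Subgroup.zpowers γ)
    (ω : ℕ → ℕ) (hω : ∀ i, ω i = ∑ l ∈ Finset.range m, i / q ^ l % q)
    (N : ℕ → ℕ)
    (hN : ∀ t, N t = ((Finset.range (q ^ m)).filter (fun k => ω k = t)).card)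
    (g : Fin (q ^ m - 1) → (Fin m → ZMod q)) (hginj : Function.Injective g)
    (hgsurj : ∀ x : Fin m → ZMod q, x ≠ 0 → ∃ i, g i = x)
    (φ : (Polynomial Fq ⧸ (Ideal.span {Polynomial.X ^ (q ^ m - 1) - 1} :
            Ideal (Polynomial Fq))) →ₗ[Fq] AddMonoidAlgebra Fq (Fin m → ZMod q))
    (hφinj : Function.Injective φ)
    (hφ : ∀ f : Polynomial Fq, f.natDegree < q ^ m - 1 →
      φ (Ideal.Quotient.mk _ f) =
        AddMonoidAlgebra.single (0 : Fin m → ZMod q)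
            (-(∑ i ∈ Finset.range (q ^ m - 1), f.coeff i)) +
          ∑ i : Fin (q ^ m - 1), AddMonoidAlgebra.single (g i) (f.coeff (i : ℕ)))
    (Fpoly : ℕ → Polynomial Fq)
    (hFpoly : ∀ k, (Fpoly k).map (algebraMap Fq K) =
      ∏ i ∈ (Finset.range (q ^ m)).filter
          (fun i => 0 < ω i ∧ ω i ≤ m * (q - 1) - k - 1),
        (Polynomial.X - Polynomial.C ((γ : K) ^ i)))
    (Code : ℕ → Submodule Fq (AddMonoidAlgebra Fq (Fin m → ZMod q)))
    (hCode : ∀ k, Code k = Submodule.map φ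
      (Submodule.restrictScalars Fq (Ideal.span {Ideal.Quotient.mk _ (Fpoly k)})))
    (θ : ℕ → ℕ → AddMonoidAlgebra Fq (Fin m → ZMod q))
    (hθ : ∀ i j, θ i j = φ (Ideal.Quotient.mk _ (Polynomial.X ^ j * Fpoly i)))
    (ν : ℕ) (hν1 : 1 ≤ ν) (hν2 : ν ≤ m * (q - 1) - 1) :
    LinearIndependent Fq
        (fun x : {ij : ℕ × ℕ // ij = (0, 0) ∨
            (1 ≤ ij.1 ∧ ij.1 ≤ ν ∧ ij.2 < N (m * (q - 1) - ij.1))} =>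
          θ x.1.1 x.1.2) ∧
      Submodule.span Fq
          (Set.range (fun x : {ij : ℕ × ℕ // ij = (0, 0) ∨
              (1 ≤ ij.1 ∧ ij.1 ≤ ν ∧ ij.2 < N (m * (q - 1) - ij.1))} =>
            θ x.1.1 x.1.2)) = Code ν ∧
      Nat.card {ij : ℕ × ℕ // ij = (0, 0) ∨
          (1 ≤ ij.1 ∧ ij.1 ≤ ν ∧ ij.2 < N (m * (q - 1) - ij.1))} =
        Module.finrank Fq (Code ν) :=
  GRM_generating_set_general m q Fq K hK γ hγ ω hω N hN φ hφinj Fpoly hFpoly Code hCode θ hθ ν hν1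
    hν2
end
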